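/- Let ψ be a homeomorphism of ℝ² with M := ‖ψ‖_* < ∞, let B = B(x₀,r) be a ball with 0 < r ≤ 1/2, and let 0 < ε ≤ 1. Then every x ∈ B with dist(ψ(x), ψ(ℝ² \ B)) ≤ ε satisfies dist(x, ∂B) ≤ e ε^{1/M}; consequently the Lebesgue measure of the set {x ∈ B : dist(ψ(x), ψ(ℝ² \ B)) ≤ ε} is at most 2πe ε^{1/M} r. -/

import Mathlib

open MeasureTheory Metric Real
open scoped ENNReal

noncomputable section

abbrev E2 := EuclideanSpace ℝ (Fin 2)

/-- The comparison function `Φ`. -/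
def Phi (r s : ℝ) : ℝ :=
  if 0 ≤ (1 - s) * (1 - r) then
    max ((1 + |Real.log s|) / (1 + |Real.log r|)) ((1 + |Real.log r|) / (1 + |Real.log s|))
  else (1 + |Real.log s|) * (1 + |Real.log r|)

/-- `‖ψ‖_* = sup_{x ≠ y} Φ(|ψ(x)-ψ(y)|, |x-y|)`, a supremum taken in `[0,∞]`. -/
def starNorm (ψ : E2 → E2) : ℝ≥0∞ :=
  ⨆ (x : E2) (y : E2) (_ : x ≠ y), ENNReal.ofReal (Phi (dist (ψ x) (ψ y)) (dist x y))

/-!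
Let `x ∈ B` with `dist(ψ x, ψ(ℝ² \ B)) ≤ ε`, attained at `ψ y` with `y ∉ B`, and put
`ρ = |ψ x - ψ y| ≤ ε`, `s = |x - y|`, so that `dist(x, ∂B) ≤ min s 1` (as `r ≤ 1/2`).
Either branch of `Φ` gives `1 + |log ρ| ≤ Φ(ρ, s) (1 + |log s|)`, so for `s ≤ 1` the bound
`Φ(ρ, s) ≤ M` yields `log s ≤ 1 + (log ε) / M`, i.e. `s ≤ e ε^{1/M}`. For `s ≥ 1` and `ρ < 1`
only the product branch of `Φ` is possible, so `-log ε ≤ |log ρ| ≤ M`, i.e. `1 ≤ e ε^{1/M}`.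
Hence the set lies in the annulus of width `δ = e ε^{1/M}` inside `∂B`, whose area
`π r² - π (r - δ)²` is at most `2π δ r`.
-/

lemma one_le_Phi (r s : ℝ) : 1 ≤ Phi r s := by
  have hr : 0 < 1 + |log r| := by positivity
  have hs : 0 < 1 + |log s| := by positivity
  unfold Phi
  split_ifs
  · rcases le_total (1 + |log s|) (1 + |log r|) with h | h
    · exact le_max_of_le_right ((one_le_div hs).2 h)
    · exact le_max_of_le_left ((one_le_div hr).2 h)
  · nlinarith [abs_nonneg (log r), abs_nonneg (log s)]

lemma one_add_abs_log_le_Phi_mul (r s : ℝ) : 1 + |log r| ≤ Phi r s * (1 + |log s|) := by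
  have hs : 0 < 1 + |log s| := by positivity
  unfold Phi
  split_ifs
  · rw [← div_le_iff₀ hs]
    exact le_max_right _ _
  · have h1 : 1 ≤ 1 + |log s| := by linarith [abs_nonneg (log s)]
    calc 1 + |log r| = 1 * (1 + |log r|) * 1 := by ring
      _ ≤ (1 + |log s|) * (1 + |log r|) * (1 + |log s|) := by gcongr

lemma neg_log_le_Phi {r s : ℝ} (hs : 1 ≤ s) : -log r ≤ Phi r s := by
  rcases lt_or_ge 1 r with hr | hr
  · linarith [log_pos hr, one_le_Phi r s]
  rcases hs.eq_or_lt with rfl | hs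
  · have h := one_add_abs_log_le_Phi_mul r 1
    simp only [log_one, abs_zero, add_zero, mul_one] at h
    linarith [neg_le_abs (log r)]
  rcases hr.eq_or_lt with rfl | hr
  · simpa using (zero_le_one.trans (one_le_Phi 1 s))
  have hΦ : Phi r s = (1 + |log s|) * (1 + |log r|) := by
    rw [Phi, if_neg (not_le.2 (mul_neg_of_neg_of_pos (by linarith) (by linarith)))]
  rw [hΦ]
  nlinarith [neg_le_abs (log r), abs_nonneg (log r), abs_nonneg (log s)]

lemma Phi_le_starNorm_toReal {ψ : E2 → E2} (hfin : starNorm ψ ≠ ⊤) {x y : E2} (hxy : x ≠ y) :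
    Phi (dist (ψ x) (ψ y)) (dist x y) ≤ (starNorm ψ).toReal :=
  (ENNReal.ofReal_le_iff_le_toReal hfin).1 <|
    le_iSup_of_le x <| le_iSup_of_le y <| le_iSup_of_le hxy le_rfl

lemma one_le_starNorm_toReal {ψ : E2 → E2} (hfin : starNorm ψ ≠ ⊤) : 1 ≤ (starNorm ψ).toReal :=
  let ⟨_, _, hxy⟩ := exists_pair_ne E2
  (one_le_Phi _ _).trans (Phi_le_starNorm_toReal hfin hxy)

lemma min_le_exp_mul_rpow_of_Phi_le {ρ ε s M : ℝ} (hρ : 0 < ρ) (hρε : ρ ≤ ε) (hs : 0 < s)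
    (hM : 0 < M) (hΦ : Phi ρ s ≤ M) : min s 1 ≤ exp 1 * ε ^ (1 / M) := by
  have hε : 0 < ε := hρ.trans_le hρε
  have hlog : -log ε ≤ -log ρ := neg_le_neg (log_le_log hρ hρε)
  rw [rpow_def_of_pos hε, ← exp_add]
  rcases le_or_gt s 1 with hs1 | hs1
  · rw [min_eq_left hs1, ← exp_log hs, exp_le_exp]
    have key : 1 + |log ρ| ≤ M * (1 - log s) := by
      have h := one_add_abs_log_le_Phi_mul ρ s
      rw [abs_of_nonpos (log_nonpos hs.le hs1)] at h
      exact h.trans (mul_le_mul_of_nonneg_right hΦ (by linarith [log_nonpos hs.le hs1]))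
    rw [mul_one_div, ← sub_le_iff_le_add', le_div_iff₀ hM]
    linarith [neg_le_abs (log ρ)]
  · rw [min_eq_right hs1.le]
    refine one_le_exp ?_
    have h : -log ε ≤ M := hlog.trans ((neg_log_le_Phi hs1.le).trans hΦ)
    have : -1 ≤ log ε * (1 / M) := by
      rw [mul_one_div, le_div_iff₀ hM]
      linarith
    linarith

lemma infDist_frontier_le_dist {E : Type*} [NormedAddCommGroup E] [NormedSpace ℝ E]
    [FiniteDimensional ℝ E] {s : Set E} {x y : E} (hx : x ∈ s) (hy : y ∉ s) :
    infDist x (frontier s) ≤ dist x y := by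
  obtain ⟨z, hz, hxz⟩ :=
    exists_mem_frontier_infDist_compl_eq_dist hx (Set.ne_univ_iff_exists_notMem _ |>.2 ⟨y, hy⟩)
  calc infDist x (frontier s) ≤ dist x z := infDist_le_dist_of_mem hz
    _ = infDist x sᶜ := hxz.symm
    _ ≤ dist x y := infDist_le_dist_of_mem hy

lemma sub_dist_le_infDist_sphere {α : Type*} [PseudoMetricSpace α] {x₀ : α} {r : ℝ}
    (hr : (sphere x₀ r).Nonempty) (x : α) : r - dist x x₀ ≤ infDist x (sphere x₀ r) :=
  (le_infDist hr).2 fun z hz => by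
    linarith [mem_sphere.1 hz, dist_triangle z x x₀, dist_comm x z]

lemma volume_ball_diff_ball_le (x₀ : E2) {r : ℝ} (hr : 0 ≤ r) (δ : ℝ) :
    volume (ball x₀ r \ ball x₀ (r - δ)) ≤ ENNReal.ofReal (2 * π * δ * r) := by
  rcases le_or_gt δ 0 with hδ | hδ
  · simp [Set.sdiff_eq_empty.2 (ball_subset_ball (by linarith : r ≤ r - δ))]
  have hvol : ∀ t, 0 ≤ t → volume (ball x₀ t) = ENNReal.ofReal (π * t ^ 2) := fun t ht => by
    rw [EuclideanSpace.volume_ball_fin_two, ← ENNReal.ofReal_pow ht,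
      ← ENNReal.ofReal_mul (by positivity), mul_comm]
  rcases le_or_gt r δ with hrδ | hrδ
  · calc volume (ball x₀ r \ ball x₀ (r - δ)) ≤ volume (ball x₀ r) := measure_mono Set.sdiff_subset
      _ = ENNReal.ofReal (π * r ^ 2) := hvol r hr
      _ ≤ ENNReal.ofReal (2 * π * δ * r) := by
        refine ENNReal.ofReal_le_ofReal ?_
        nlinarith [mul_le_mul_of_nonneg_left (by linarith : r ≤ 2 * δ) (mul_nonneg pi_pos.le hr)]
  rw [measure_sdiff (ball_subset_ball (by linarith)) measurableSet_ball.nullMeasurableSet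
      measure_ball_lt_top.ne, hvol r hr, hvol (r - δ) (by linarith), tsub_le_iff_right,
    ← ENNReal.ofReal_add (by positivity) (by positivity)]
  gcongr
  nlinarith [pi_pos, sq_nonneg δ]

lemma infDist_sphere_le_of_infDist_image_compl_le (ψ : E2 ≃ₜ E2) (hfin : starNorm ψ ≠ ⊤)
    {x₀ : E2} {r : ℝ} (hr0 : 0 < r) (hr : r ≤ 1 / 2) {ε : ℝ} {x : E2} (hx : x ∈ ball x₀ r)
    (hxε : infDist (ψ x) (ψ '' (ball x₀ r)ᶜ) ≤ ε) :
    infDist x (sphere x₀ r) ≤ exp 1 * ε ^ (1 / (starNorm ψ).toReal) := by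
  obtain ⟨z₀, hz₀⟩ := (NormedSpace.sphere_nonempty (x := x₀)).2 hr0.le
  have hz₀B : z₀ ∉ ball x₀ r := by simp [mem_sphere.1 hz₀]
  obtain ⟨_, ⟨y, hy, rfl⟩, hρ⟩ :=
    (ψ.isClosedMap _ isOpen_ball.isClosed_compl).exists_infDist_eq_dist
      ⟨ψ z₀, Set.mem_image_of_mem _ hz₀B⟩ (ψ x)
  have hxy : x ≠ y := fun h => hy (h ▸ hx)
  have hd : infDist x (sphere x₀ r) ≤ min (dist x y) 1 := by
    refine le_min ?_ ?_
    · rw [← frontier_ball x₀ hr0.ne']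
      exact infDist_frontier_le_dist hx hy
    · linarith [infDist_le_dist_of_mem (x := x) hz₀, dist_triangle x x₀ z₀, mem_ball.1 hx,
        dist_comm x₀ z₀, mem_sphere.1 hz₀]
  exact hd.trans <| min_le_exp_mul_rpow_of_Phi_le (dist_pos.2 (ψ.injective.ne hxy))
    (hρ ▸ hxε) (dist_pos.2 hxy) (zero_lt_one.trans_le (one_le_starNorm_toReal hfin))
    (Phi_le_starNorm_toReal hfin hxy)

theorem near_boundary_measure_estimate_general (ψ : E2 ≃ₜ E2) (hfin : starNorm ψ ≠ ⊤)
    (x₀ : E2) (r : ℝ) (hr0 : 0 < r) (hr : r ≤ 1 / 2)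
    (ε : ℝ) :
    (∀ x ∈ ball x₀ r,
        infDist (ψ x) (⇑ψ '' (ball x₀ r)ᶜ) ≤ ε →
        infDist x (sphere x₀ r) ≤ Real.exp 1 * ε ^ (1 / (starNorm ψ).toReal)) ∧
    volume {x | x ∈ ball x₀ r ∧ infDist (ψ x) (⇑ψ '' (ball x₀ r)ᶜ) ≤ ε} ≤
      ENNReal.ofReal (2 * Real.pi * Real.exp 1 * ε ^ (1 / (starNorm ψ).toReal) * r) := by
  set δ := exp 1 * ε ^ (1 / (starNorm ψ).toReal)
  have near : ∀ x ∈ ball x₀ r, infDist (ψ x) (ψ '' (ball x₀ r)ᶜ) ≤ ε →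
      infDist x (sphere x₀ r) ≤ δ := fun x hx hxε =>
    infDist_sphere_le_of_infDist_image_compl_le ψ hfin hr0 hr hx hxε
  refine ⟨near, ?_⟩
  have hsub : {x | x ∈ ball x₀ r ∧ infDist (ψ x) (ψ '' (ball x₀ r)ᶜ) ≤ ε} ⊆
      ball x₀ r \ ball x₀ (r - δ) := fun x ⟨hx, hxε⟩ => by
    refine ⟨hx, fun hxδ => ?_⟩
    linarith [mem_ball.1 hxδ, near x hx hxε,
      sub_dist_le_infDist_sphere ((NormedSpace.sphere_nonempty (x := x₀)).2 hr0.le) x]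
  calc _ ≤ volume (ball x₀ r \ ball x₀ (r - δ)) := measure_mono hsub
    _ ≤ ENNReal.ofReal (2 * π * δ * r) := volume_ball_diff_ball_le x₀ hr0.le δ
    _ = _ := by simp only [δ, mul_assoc]

/-- points of a ball mapped `ε`-close to the image of the complement lie
`e ε^{1/M}`-close to the boundary circle, and the measure of the set of such points is at
most `2πe ε^{1/M} r`. -/
theorem near_boundary_measure_estimate (ψ : E2 ≃ₜ E2) (hfin : starNorm ψ ≠ ⊤)
    (x₀ : E2) (r : ℝ) (hr0 : 0 < r) (hr : r ≤ 1 / 2)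
    (ε : ℝ) (hε0 : 0 < ε) (hε1 : ε ≤ 1) :
    (∀ x ∈ ball x₀ r,
        infDist (ψ x) (⇑ψ '' (ball x₀ r)ᶜ) ≤ ε →
        infDist x (sphere x₀ r) ≤ Real.exp 1 * ε ^ (1 / (starNorm ψ).toReal)) ∧
    volume {x | x ∈ ball x₀ r ∧ infDist (ψ x) (⇑ψ '' (ball x₀ r)ᶜ) ≤ ε} ≤
      ENNReal.ofReal (2 * Real.pi * Real.exp 1 * ε ^ (1 / (starNorm ψ).toReal) * r) :=
  near_boundary_measure_estimate_general ψ hfin x₀ r hr0 hr ε
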